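/- Let 0 ≤ λ < 1 and ω ∈ A_1^+. Let T⁺ be an operator mapping measurable functions on ℝ to measurable functions on ℝ that is sublinear (|T⁺(f+g)(x)| ≤ |T⁺f(x)| + |T⁺g(x)| for a.e. x), satisfies the size condition |T⁺f(x)| ≤ C ∫_x^∞ |f(y)| (y−x)^{−1} dy for a.e. x whenever the right-hand side is finite, and is of weak type (1,1): γ · |{x ∈ ℝ : |T⁺f(x)| > γ}| ≤ C ∫_ℝ |f| for all γ > 0. Then there exists a constant C' such that for every f with ‖f‖_{L^{1,λ}_+(ω)} < ∞, every x0 ∈ ℝ, h > 0 and γ > 0, γ · |{x ∈ (x0, x0+h) : |T⁺f(x)| > γ}| ≤ C' · Φ⁺_{ω,λ,1}(x0,h) · ‖f‖_{L^{1,λ}_+(ω)}; that is, T⁺ is bounded from L^{1,λ}_+(ω) to WL^{1,λ}_+(ω). -/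

import Mathlib

open MeasureTheory
open scoped ENNReal

/-- The one-sided Muckenhoupt class `A_1^+`: `M⁻ω ≤ C·ω` a.e. -/
def MemA1Plus (ω : ℝ → ℝ) : Prop :=
  ∃ C > (0:ℝ), ∀ᵐ x ∂(volume : Measure ℝ), ∀ h > (0:ℝ),
    (∫ y in (x - h)..x, ω y) ≤ C * h * ω x

/-- `Φ⁺_{ω,λ,θ}(x0,h) = h^{λ−1} ∫_{x0−h}^{x0} ω^θ`. -/
noncomputable def Phi (ω : ℝ → ℝ) (lam θ x0 h : ℝ) : ℝ :=
  h ^ (lam - 1) * ∫ y in (x0 - h)..x0, (ω y) ^ θ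

/-- The one-sided weighted Morrey norm
`‖f‖_{L^{p,λ}_+(ω^θ)} = sup_{x0, h>0} (Φ⁺_{ω,λ,θ}(x0,h)⁻¹ ∫_{x0}^{x0+h} |f|^p)^{1/p}`. -/
noncomputable def morreyNorm (ω : ℝ → ℝ) (p lam θ : ℝ) (f : ℝ → ℝ) : ℝ≥0∞ :=
  ⨆ (x0 : ℝ) (h : ℝ) (_ : 0 < h),
    ((∫⁻ y in Set.Ioo x0 (x0 + h), ENNReal.ofReal (|f y| ^ p)) /
      ENNReal.ofReal (Phi ω lam θ x0 h)) ^ (1 / p)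

/-!
Split `f` at `(x0, x0 + 2h)`. The near part has `∫⁻ |·| ≤ Φ⁺(x0, 2h)‖f‖`, the `A_1^+`
condition makes `Φ⁺` doubling (`Φ⁺(x0, Rh) ≲ R^λ Φ⁺(x0, h)` for `R ≥ 1`), and the weak `(1,1)`
bound handles it. For `x ∈ (x0, x0 + h)` the size condition bounds the far part pointwise by a dyadic
sum `∑ₖ (2ᵏh)⁻¹ Φ⁺(x0, 2ᵏ⁺¹h) ‖f‖ ≲ ∑ₖ 2^(k(λ-1)) Φ⁺(x0, h) ‖f‖ / h`, a convergent geometric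
series because `λ < 1`. As this bound is uniform in `x`, the set where the far part exceeds
`γ/2` is null unless `γ/2` is below the bound, and it has measure at most `h`.

Since `f` need not be measurable, `∫⁻` is a lower integral here. The near part is replaced by
an integrable function up to two errors of vanishing lower integral, and the size condition
forces `T` to vanish almost everywhere on such errors.
-/

open Set

section Measure

variable {α : Type*} [MeasurableSpace α] {μ ν : Measure α}

theorem lintegral_eq_zero_of_absolutelyContinuous {f : α → ℝ≥0∞} (hνμ : ν ≪ μ)
    (hf : ∫⁻ x, f x ∂μ = 0) : ∫⁻ x, f x ∂ν = 0 := by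
  obtain ⟨g, hg, hgf, hgν⟩ := exists_measurable_le_lintegral_eq ν f
  have hgμ : g =ᵐ[μ] 0 :=
    (lintegral_eq_zero_iff hg).1 (le_antisymm ((lintegral_mono hgf).trans hf.le) zero_le)
  rw [hgν, lintegral_eq_zero_iff hg]
  exact hνμ.ae_le hgμ

theorem lintegral_mul_eq_zero_of_lintegral_eq_zero {ρ f : α → ℝ≥0∞} (hρ : Measurable ρ)
    (hρ_fin : ∀ᵐ x ∂μ, ρ x < ∞) (hf : ∫⁻ x, f x ∂μ = 0) : ∫⁻ x, ρ x * f x ∂μ = 0 := by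
  simp only [← Pi.mul_apply ρ f,
    ← lintegral_withDensity_eq_lintegral_mul_non_measurable μ hρ hρ_fin]
  exact lintegral_eq_zero_of_absolutelyContinuous (withDensity_absolutelyContinuous μ ρ) hf

theorem exists_integrable_le_lintegral_sub_eq_zero {q : α → ℝ} (hq : 0 ≤ q)
    (hfin : ∫⁻ x, ENNReal.ofReal (q x) ∂μ ≠ ∞) :
    ∃ m : α → ℝ, Integrable m μ ∧ 0 ≤ m ∧ m ≤ q ∧ ∫⁻ x, ENNReal.ofReal (q x - m x) ∂μ = 0 := by
  obtain ⟨g, hg, hgq, hgμ⟩ := exists_measurable_le_lintegral_eq μ fun x => ENNReal.ofReal (q x)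
  have hg_top : ∀ x, g x ≠ ∞ := fun x => ne_top_of_le_ne_top ENNReal.ofReal_ne_top (hgq x)
  refine ⟨fun x => (g x).toReal,
    integrable_toReal_of_lintegral_ne_top hg.aemeasurable (hgμ ▸ hfin),
    fun x => ENNReal.toReal_nonneg, fun x => ENNReal.toReal_le_of_le_ofReal (hq x) (hgq x), ?_⟩
  have hsplit : ∀ x, ENNReal.ofReal (q x) = g x + ENNReal.ofReal (q x - (g x).toReal) := by
    intro x
    rw [ENNReal.ofReal_sub _ ENNReal.toReal_nonneg, ENNReal.ofReal_toReal (hg_top x),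
      add_tsub_cancel_of_le (hgq x)]
  have h := lintegral_congr (μ := μ) hsplit
  rw [lintegral_add_left hg, hgμ] at h
  exact (ENNReal.add_right_inj (hgμ ▸ hfin)).1 (by rw [add_zero]; exact h.symm)

theorem exists_integrable_add_add_of_lintegral_ne_top {g : α → ℝ}
    (hg : ∫⁻ x, ENNReal.ofReal |g x| ∂μ ≠ ∞) :
    ∃ g₀ e₁ e₂ : α → ℝ, g = g₀ + (e₁ + e₂) ∧ Integrable g₀ μ ∧ (∀ x, |g₀ x| ≤ |g x|) ∧
      ∫⁻ x, ENNReal.ofReal |e₁ x| ∂μ = 0 ∧ ∫⁻ x, ENNReal.ofReal |e₂ x| ∂μ = 0 := by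
  have hfin {q : α → ℝ} (hq : ∀ x, q x ≤ |g x|) : ∫⁻ x, ENNReal.ofReal (q x) ∂μ ≠ ∞ :=
    ne_top_of_le_ne_top hg (lintegral_mono fun x => ENNReal.ofReal_le_ofReal (hq x))
  obtain ⟨m₁, hm₁, hm₁0, hm₁g, he₁⟩ := exists_integrable_le_lintegral_sub_eq_zero
    (q := fun x => max (g x) 0) (fun x => le_max_right _ _)
    (hfin fun x => max_le (le_abs_self _) (abs_nonneg _))
  obtain ⟨m₂, hm₂, hm₂0, hm₂g, he₂⟩ := exists_integrable_le_lintegral_sub_eq_zero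
    (q := fun x => max (-g x) 0) (fun x => le_max_right _ _)
    (hfin fun x => max_le (neg_le_abs _) (abs_nonneg _))
  refine ⟨m₁ - m₂, fun x => max (g x) 0 - m₁ x, fun x => -(max (-g x) 0 - m₂ x), ?_,
    hm₁.sub hm₂, fun x => ?_, ?_, ?_⟩
  · funext x
    have := max_zero_sub_max_neg_zero_eq_self (g x)
    simp only [Pi.add_apply, Pi.sub_apply]
    linarith
  · have h₁ : m₁ x ≤ max (g x) 0 := hm₁g x
    have h₂ : m₂ x ≤ max (-g x) 0 := hm₂g x
    have := hm₁0 x; have := hm₂0 x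
    rw [Pi.sub_apply, abs_le, ← max_zero_add_max_neg_zero_eq_abs_self (g x)]
    simp only [Pi.zero_apply] at *
    constructor <;> linarith
  · simpa only [abs_of_nonneg (sub_nonneg.2 (hm₁g _))] using he₁
  · simpa only [abs_neg, abs_of_nonneg (sub_nonneg.2 (hm₂g _))] using he₂

theorem mul_measure_sep_lt_le {s : Set α} {F : α → ℝ} {M : ℝ≥0∞}
    (hF : ∀ᵐ x ∂μ, x ∈ s → ENNReal.ofReal (F x) ≤ M) (t : ℝ) :
    ENNReal.ofReal t * μ {x ∈ s | t < F x} ≤ M * μ s := by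
  rcases eq_or_ne (μ {x ∈ s | t < F x}) 0 with h0 | h0
  · simp [h0]
  rw [← measure_sdiff_null (ae_iff.1 hF)] at h0
  obtain ⟨x, ⟨hxs, hxt⟩, hxF⟩ := nonempty_of_measure_ne_zero h0
  have htM : ENNReal.ofReal t ≤ M := (ENNReal.ofReal_le_ofReal hxt.le).trans (not_not.1 hxF hxs)
  exact mul_le_mul' htM (measure_mono (sep_subset _ _))

theorem mul_measure_sep_lt_le_add {s : Set α} {F G H : α → ℝ}
    (hFGH : ∀ᵐ x ∂μ, F x ≤ G x + H x) (t : ℝ) :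
    ENNReal.ofReal t * μ {x ∈ s | t < F x} ≤
      2 * (ENNReal.ofReal (t / 2) * μ {x | t / 2 < G x} +
        ENNReal.ofReal (t / 2) * μ {x ∈ s | t / 2 < H x}) := by
  have ht : ENNReal.ofReal t = 2 * ENNReal.ofReal (t / 2) := by
    rw [← ENNReal.ofReal_ofNat, ← ENNReal.ofReal_mul zero_le_two, mul_div_cancel₀ _ two_ne_zero]
  rw [ht, mul_assoc, ← mul_add]
  gcongr
  refine (measure_mono_ae ?_).trans (measure_union_le _ _)
  filter_upwards [hFGH] with x hx ⟨hxs, hxt⟩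
  by_cases hG : t / 2 < G x
  · exact Or.inl hG
  · exact Or.inr ⟨hxs, by linarith⟩

end Measure

theorem ae_eq_zero_of_lintegral_abs_eq_zero {T : (ℝ → ℝ) → ℝ → ℝ} {Cs : ℝ}
    (hsize : ∀ f : ℝ → ℝ, ∀ᵐ x, ENNReal.ofReal |T f x| ≤
      ENNReal.ofReal Cs * ∫⁻ y in Ioi x, ENNReal.ofReal (|f y| / (y - x)))
    {e : ℝ → ℝ} (he : ∫⁻ y, ENNReal.ofReal |e y| = 0) : ∀ᵐ x, T e x = 0 := by
  filter_upwards [hsize e] with x hx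
  have hkernel : ∫⁻ y in Ioi x, ENNReal.ofReal (|e y| / (y - x)) = 0 := by
    have h := lintegral_mul_eq_zero_of_lintegral_eq_zero (μ := volume.restrict (Ioi x))
      (ρ := fun y => ENNReal.ofReal (y - x)⁻¹) (by fun_prop)
      (ae_of_all _ fun _ => ENNReal.ofReal_lt_top)
      (le_antisymm ((setLIntegral_le_lintegral _ _).trans he.le) zero_le)
    simpa only [div_eq_mul_inv, ENNReal.ofReal_mul (abs_nonneg _), mul_comm] using h
  rw [hkernel, mul_zero, nonpos_iff_eq_zero, ENNReal.ofReal_eq_zero] at hx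
  exact abs_nonpos_iff.1 hx

theorem exists_integrable_abs_apply_add_le {T : (ℝ → ℝ) → ℝ → ℝ} {Cs : ℝ}
    (hsub : ∀ f g : ℝ → ℝ, ∀ᵐ x, |T (f + g) x| ≤ |T f x| + |T g x|)
    (hsize : ∀ f : ℝ → ℝ, ∀ᵐ x, ENNReal.ofReal |T f x| ≤
      ENNReal.ofReal Cs * ∫⁻ y in Ioi x, ENNReal.ofReal (|f y| / (y - x)))
    {g : ℝ → ℝ} (hg : ∫⁻ y, ENNReal.ofReal |g y| ≠ ∞) (k : ℝ → ℝ) :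
    ∃ g₀ : ℝ → ℝ, Integrable g₀ ∧ (∀ y, |g₀ y| ≤ |g y|) ∧
      ∀ᵐ x, |T (g + k) x| ≤ |T g₀ x| + |T k x| := by
  obtain ⟨g₀, e₁, e₂, rfl, hg₀, hg₀g, he₁, he₂⟩ := exists_integrable_add_add_of_lintegral_ne_top hg
  refine ⟨g₀, hg₀, hg₀g, ?_⟩
  filter_upwards [hsub g₀ (e₁ + (e₂ + k)), hsub e₁ (e₂ + k), hsub e₂ k,
    ae_eq_zero_of_lintegral_abs_eq_zero hsize he₁, ae_eq_zero_of_lintegral_abs_eq_zero hsize he₂]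
    with x h₀ h₁ h₂ hT₁ hT₂
  rw [hT₁, abs_zero] at h₁
  rw [hT₂, abs_zero] at h₂
  rw [add_assoc, add_assoc]
  linarith

theorem MemA1Plus.exists_integral_le {ω : ℝ → ℝ} (hA : MemA1Plus ω) (hω : ∀ x, 0 ≤ ω x)
    (hloc : LocallyIntegrable ω volume) :
    ∃ D > (0 : ℝ), ∀ x0 h R : ℝ, 0 < h → 1 ≤ R →
      ∫ y in (x0 - R * h)..x0, ω y ≤ D * R * ∫ y in (x0 - h)..x0, ω y := by
  obtain ⟨C, hC, hA⟩ := hA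
  refine ⟨C + 1, by linarith, fun x0 h R hh hR => ?_⟩
  have hii (a b : ℝ) : IntervalIntegrable ω volume a b :=
    (hloc.integrableOn_isCompact isCompact_uIcc).intervalIntegrable
  set B := ∫ y in (x0 - h)..x0, ω y with hB_def
  set s := Ioo (x0 - h) x0
  have hvol : volume s = ENNReal.ofReal h := by simp [s, Real.volume_Ioo]
  have havg : ⨍ y in s, ω y = B / h := by
    rw [hB_def, intervalIntegral.integral_of_le (by linarith), integral_Ioc_eq_integral_Ioo,
      setAverage_eq, Measure.real, hvol, ENNReal.toReal_ofReal hh.le, smul_eq_mul, inv_mul_eq_div]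
  obtain ⟨x, ⟨hxs, hx_avg⟩, hxA⟩ : ∃ x, (x ∈ s ∧ ω x ≤ ⨍ y in s, ω y) ∧
      ∀ h' > (0 : ℝ), ∫ y in (x - h')..x, ω y ≤ C * h' * ω x := by
    -- first moment method: `ω` is at most its mean on a subset of `s` of positive measure
    have hmean := measure_le_setAverage_pos (s := s) (by simpa [hvol] using hh) (by simp [hvol])
      ((hloc.integrableOn_isCompact isCompact_Icc).mono_set Ioo_subset_Icc_self)
    rw [← measure_sdiff_null (ae_iff.1 hA)] at hmean
    obtain ⟨x, hx, hxA⟩ := nonempty_of_measure_ne_zero hmean.ne'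
    exact ⟨x, hx, not_not.1 hxA⟩
  have hleft : ∫ y in (x0 - R * h)..x, ω y ≤ C * R * B := by
    have hlen : 0 < x - (x0 - R * h) := by nlinarith [hxs.1]
    calc ∫ y in (x0 - R * h)..x, ω y ≤ C * (x - (x0 - R * h)) * ω x := by
          simpa using hxA _ hlen
      _ ≤ C * (R * h) * (B / h) := by
          gcongr
          · exact hω x
          · linarith [hxs.2]
          · rwa [← havg]
      _ = C * R * B := by field_simp
  have hright : ∫ y in x..x0, ω y ≤ B := by
    have hsplit := intervalIntegral.integral_add_adjacent_intervals (hii (x0 - h) x) (hii x x0)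
    have : 0 ≤ ∫ y in (x0 - h)..x, ω y := intervalIntegral.integral_nonneg hxs.1.le fun y _ => hω y
    linarith
  have hB : 0 ≤ B := intervalIntegral.integral_nonneg (by linarith) fun y _ => hω y
  rw [← intervalIntegral.integral_add_adjacent_intervals (hii _ x) (hii x x0)]
  nlinarith

theorem Phi_nonneg {ω : ℝ → ℝ} (hω : ∀ x, 0 ≤ ω x) (lam x0 : ℝ) {h : ℝ} (hh : 0 ≤ h) :
    0 ≤ Phi ω lam 1 x0 h :=
  mul_nonneg (by positivity) <|
    intervalIntegral.integral_nonneg (by linarith) fun y _ => Real.rpow_nonneg (hω y) _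

theorem Phi_mul_le {ω : ℝ → ℝ} {D : ℝ}
    (hD : ∀ x0 h R : ℝ, 0 < h → 1 ≤ R →
      ∫ y in (x0 - R * h)..x0, ω y ≤ D * R * ∫ y in (x0 - h)..x0, ω y)
    (lam x0 : ℝ) {h R : ℝ} (hh : 0 < h) (hR : 1 ≤ R) :
    Phi ω lam 1 x0 (R * h) ≤ D * R ^ lam * Phi ω lam 1 x0 h := by
  have hR0 : 0 < R := by linarith
  simp only [Phi, Real.rpow_one]
  rw [Real.mul_rpow hR0.le hh.le]
  calc R ^ (lam - 1) * h ^ (lam - 1) * ∫ y in (x0 - R * h)..x0, ω y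
      ≤ R ^ (lam - 1) * h ^ (lam - 1) * (D * R * ∫ y in (x0 - h)..x0, ω y) := by
        gcongr
        exact hD x0 h R hh hR
    _ = D * (R ^ (lam - 1) * R) * (h ^ (lam - 1) * ∫ y in (x0 - h)..x0, ω y) := by ring
    _ = D * R ^ lam * (h ^ (lam - 1) * ∫ y in (x0 - h)..x0, ω y) := by
        rw [← Real.rpow_add_one hR0.ne', sub_add_cancel]

theorem lintegral_Ioo_le_Phi_mul_morreyNorm {ω : ℝ → ℝ} {lam θ : ℝ} {f : ℝ → ℝ}
    (hf : morreyNorm ω 1 lam θ f ≠ ∞) (x0 : ℝ) {H : ℝ} (hH : 0 < H) :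
    ∫⁻ y in Ioo x0 (x0 + H), ENNReal.ofReal |f y| ≤
      ENNReal.ofReal (Phi ω lam θ x0 H) * morreyNorm ω 1 lam θ f := by
  have h : ((∫⁻ y in Ioo x0 (x0 + H), ENNReal.ofReal (|f y| ^ (1 : ℝ))) /
      ENNReal.ofReal (Phi ω lam θ x0 H)) ^ (1 / (1 : ℝ)) ≤ morreyNorm ω 1 lam θ f :=
    le_iSup_of_le x0 <| le_iSup_of_le H <| le_iSup_of_le hH le_rfl
  simp only [Real.rpow_one, div_one, ENNReal.rpow_one] at h
  rwa [ENNReal.div_le_iff_le_mul (Or.inr hf) (Or.inl ENNReal.ofReal_ne_top), mul_comm] at h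

theorem lintegral_Ici_div_le_tsum (u : ℝ → ℝ) (a : ℝ) {H : ℝ} (hH : 0 < H) :
    ∫⁻ y in Ici (a + H), ENNReal.ofReal (|u y| / (y - a)) ≤
      ∑' k : ℕ, ENNReal.ofReal (2 ^ k * H)⁻¹ *
        ∫⁻ y in Ioo a (a + 2 ^ (k + 1) * H), ENNReal.ofReal |u y| := by
  have hcover : Ici (a + H) ⊆ ⋃ k : ℕ, Ico (a + 2 ^ k * H) (a + 2 ^ (k + 1) * H) := by
    intro y hy
    obtain ⟨k, hk, hk'⟩ := exists_nat_pow_near (x := (y - a) / H)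
      (by rw [le_div_iff₀ hH]; linarith [mem_Ici.1 hy]) one_lt_two
    rw [le_div_iff₀ hH] at hk
    rw [div_lt_iff₀ hH] at hk'
    exact mem_iUnion.2 ⟨k, by constructor <;> linarith⟩
  refine (lintegral_mono_set hcover).trans <| (lintegral_iUnion_le _ _).trans <|
    ENNReal.tsum_le_tsum fun k => ?_
  have hk : (0 : ℝ) < 2 ^ k * H := by positivity
  calc ∫⁻ y in Ico (a + 2 ^ k * H) (a + 2 ^ (k + 1) * H), ENNReal.ofReal (|u y| / (y - a))
      ≤ ∫⁻ y in Ico (a + 2 ^ k * H) (a + 2 ^ (k + 1) * H),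
          ENNReal.ofReal (2 ^ k * H)⁻¹ * ENNReal.ofReal |u y| := by
        refine setLIntegral_mono' measurableSet_Ico fun y hy => ?_
        rw [← ENNReal.ofReal_mul (by positivity), inv_mul_eq_div]
        exact ENNReal.ofReal_le_ofReal <|
          div_le_div_of_nonneg_left (abs_nonneg _) hk (by linarith [hy.1])
    _ = ENNReal.ofReal (2 ^ k * H)⁻¹ *
          ∫⁻ y in Ico (a + 2 ^ k * H) (a + 2 ^ (k + 1) * H), ENNReal.ofReal |u y| :=
        lintegral_const_mul' _ _ ENNReal.ofReal_ne_top
    _ ≤ _ := by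
        gcongr
        linarith

theorem lintegral_Ici_div_le_of_morreyNorm {ω f : ℝ → ℝ} {lam D a H : ℝ} (hlam : lam < 1)
    (hPhi : ∀ R : ℝ, 1 ≤ R → Phi ω lam 1 a (R * H) ≤ D * R ^ lam * Phi ω lam 1 a H)
    (hf : morreyNorm ω 1 lam 1 f ≠ ∞) (hH : 0 < H) :
    ∫⁻ y in Ici (a + H), ENNReal.ofReal (|f y| / (y - a)) ≤
      ENNReal.ofReal (D * 2 ^ lam / (1 - 2 ^ (lam - 1)) * Phi ω lam 1 a H / H) *
        morreyNorm ω 1 lam 1 f := by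
  set N := morreyNorm ω 1 lam 1 f
  set r : ℝ := 2 ^ (lam - 1) with hr
  have hr0 : 0 ≤ r := by positivity
  have hr1 : r < 1 := Real.rpow_lt_one_of_one_lt_of_neg one_lt_two (by linarith)
  have hr2 : r = 2 ^ lam / 2 := Real.rpow_sub_one two_ne_zero lam
  set c := D * 2 ^ lam * Phi ω lam 1 a H / H with hc_def
  have hterm (k : ℕ) : ENNReal.ofReal (2 ^ k * H)⁻¹ *
      ∫⁻ y in Ioo a (a + 2 ^ (k + 1) * H), ENNReal.ofReal |f y| ≤
        ENNReal.ofReal c * ENNReal.ofReal r ^ k * N := by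
    have hc : (2 ^ k * H)⁻¹ * (D * ((2 : ℝ) ^ (k + 1)) ^ lam * Phi ω lam 1 a H) = c * r ^ k := by
      rw [← Real.rpow_pow_comm zero_le_two, hr2, div_pow, hc_def]
      field_simp
      ring
    calc ENNReal.ofReal (2 ^ k * H)⁻¹ * ∫⁻ y in Ioo a (a + 2 ^ (k + 1) * H), ENNReal.ofReal |f y|
        ≤ ENNReal.ofReal (2 ^ k * H)⁻¹ *
            (ENNReal.ofReal (Phi ω lam 1 a (2 ^ (k + 1) * H)) * N) := by
          gcongr
          exact lintegral_Ioo_le_Phi_mul_morreyNorm hf a (by positivity)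
      _ ≤ ENNReal.ofReal (2 ^ k * H)⁻¹ *
            (ENNReal.ofReal (D * ((2 : ℝ) ^ (k + 1)) ^ lam * Phi ω lam 1 a H) * N) := by
          gcongr
          exact hPhi _ (one_le_pow₀ one_le_two)
      _ = ENNReal.ofReal c * ENNReal.ofReal r ^ k * N := by
          rw [← mul_assoc, ← ENNReal.ofReal_mul (by positivity), hc,
            ENNReal.ofReal_mul' (by positivity), ENNReal.ofReal_pow hr0]
  calc ∫⁻ y in Ici (a + H), ENNReal.ofReal (|f y| / (y - a))
      ≤ ∑' k : ℕ, ENNReal.ofReal (2 ^ k * H)⁻¹ *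
          ∫⁻ y in Ioo a (a + 2 ^ (k + 1) * H), ENNReal.ofReal |f y| :=
        lintegral_Ici_div_le_tsum f a hH
    _ ≤ ∑' k : ℕ, ENNReal.ofReal c * ENNReal.ofReal r ^ k * N := ENNReal.tsum_le_tsum hterm
    _ = ENNReal.ofReal c * (1 - ENNReal.ofReal r)⁻¹ * N := by
        rw [ENNReal.tsum_mul_right, ENNReal.tsum_mul_left, ENNReal.tsum_geometric]
    _ = ENNReal.ofReal (D * 2 ^ lam / (1 - r) * Phi ω lam 1 a H / H) * N := by
        rw [← ENNReal.ofReal_one, ← ENNReal.ofReal_sub _ hr0,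
          ← ENNReal.ofReal_inv_of_pos (by linarith),
          ← ENNReal.ofReal_mul' (inv_nonneg.2 (by linarith))]
        congr 2
        ring

theorem lintegral_Ioi_indicator_compl_div_le (f : ℝ → ℝ) {x0 h x : ℝ}
    (hx : x ∈ Ioo x0 (x0 + h)) :
    ∫⁻ y in Ioi x, ENNReal.ofReal (|(Ioo x0 (x0 + 2 * h))ᶜ.indicator f y| / (y - x)) ≤
      2 * ∫⁻ y in Ici (x0 + 2 * h), ENNReal.ofReal (|f y| / (y - x0)) := by
  have hpt : ∀ y ∈ Ioi x,
      ENNReal.ofReal (|(Ioo x0 (x0 + 2 * h))ᶜ.indicator f y| / (y - x)) ≤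
        (Ici (x0 + 2 * h)).indicator (fun y => 2 * ENNReal.ofReal (|f y| / (y - x0))) y := by
    intro y hy
    have hxy : x < y := hy
    by_cases hy2 : y ∈ Ici (x0 + 2 * h)
    · have hy2' : x0 + 2 * h ≤ y := hy2
      rw [indicator_of_mem hy2, indicator_of_mem (show y ∈ (Ioo x0 (x0 + 2 * h))ᶜ from
          fun hV => (not_lt.2 hy2') hV.2),
        ← ENNReal.ofReal_ofNat, ← ENNReal.ofReal_mul zero_le_two]
      refine ENNReal.ofReal_le_ofReal ?_
      calc |f y| / (y - x) ≤ |f y| / ((y - x0) / 2) :=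
            div_le_div_of_nonneg_left (abs_nonneg _) (by linarith [hx.1]) (by linarith [hx.2])
        _ = 2 * (|f y| / (y - x0)) := by rw [div_div_eq_mul_div]; ring
    · have hyV : y ∈ Ioo x0 (x0 + 2 * h) := ⟨hx.1.trans hxy, not_le.1 hy2⟩
      simp [indicator_of_notMem hy2, indicator_of_notMem (show y ∉ (Ioo x0 (x0 + 2 * h))ᶜ from
        not_not_intro hyV)]
  calc ∫⁻ y in Ioi x, ENNReal.ofReal (|(Ioo x0 (x0 + 2 * h))ᶜ.indicator f y| / (y - x))
      ≤ ∫⁻ y in Ioi x,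
          (Ici (x0 + 2 * h)).indicator (fun y => 2 * ENNReal.ofReal (|f y| / (y - x0))) y :=
        setLIntegral_mono' measurableSet_Ioi hpt
    _ ≤ ∫⁻ y, (Ici (x0 + 2 * h)).indicator (fun y => 2 * ENNReal.ofReal (|f y| / (y - x0))) y :=
        setLIntegral_le_lintegral _ _
    _ = 2 * ∫⁻ y in Ici (x0 + 2 * h), ENNReal.ofReal (|f y| / (y - x0)) := by
        rw [lintegral_indicator measurableSet_Ici, lintegral_const_mul' _ _ ENNReal.ofNat_ne_top]

theorem mul_measure_abs_apply_indicator_compl_le {T : (ℝ → ℝ) → ℝ → ℝ} {Cs : ℝ} (hCs : 0 ≤ Cs)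
    (hsize : ∀ f : ℝ → ℝ, ∀ᵐ x, ENNReal.ofReal |T f x| ≤
      ENNReal.ofReal Cs * ∫⁻ y in Ioi x, ENNReal.ofReal (|f y| / (y - x)))
    {ω f : ℝ → ℝ} {lam D x0 h : ℝ} (hlam : lam < 1)
    (hPhi : ∀ R : ℝ, 1 ≤ R → Phi ω lam 1 x0 (R * (2 * h)) ≤ D * R ^ lam * Phi ω lam 1 x0 (2 * h))
    (hf : morreyNorm ω 1 lam 1 f ≠ ∞) (hh : 0 < h) (t : ℝ) :
    ENNReal.ofReal t *
        volume {x ∈ Ioo x0 (x0 + h) | t < |T ((Ioo x0 (x0 + 2 * h))ᶜ.indicator f) x|} ≤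
      ENNReal.ofReal (Cs * (D * 2 ^ lam / (1 - 2 ^ (lam - 1))) * Phi ω lam 1 x0 (2 * h)) *
        morreyNorm ω 1 lam 1 f := by
  set K := D * 2 ^ lam / (1 - 2 ^ (lam - 1))
  set P := Phi ω lam 1 x0 (2 * h)
  set N := morreyNorm ω 1 lam 1 f
  have hbound : ∀ᵐ x, x ∈ Ioo x0 (x0 + h) →
      ENNReal.ofReal |T ((Ioo x0 (x0 + 2 * h))ᶜ.indicator f) x| ≤
        ENNReal.ofReal (Cs * K * P / h) * N := by
    filter_upwards [hsize ((Ioo x0 (x0 + 2 * h))ᶜ.indicator f)] with x hx hxI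
    calc ENNReal.ofReal |T ((Ioo x0 (x0 + 2 * h))ᶜ.indicator f) x|
        ≤ ENNReal.ofReal Cs * (2 * ∫⁻ y in Ici (x0 + 2 * h), ENNReal.ofReal (|f y| / (y - x0))) :=
          hx.trans (by gcongr; exact lintegral_Ioi_indicator_compl_div_le f hxI)
      _ ≤ ENNReal.ofReal Cs * (2 * (ENNReal.ofReal (K * P / (2 * h)) * N)) := by
          gcongr
          exact lintegral_Ici_div_le_of_morreyNorm hlam hPhi hf (by positivity)
      _ = ENNReal.ofReal (Cs * K * P / h) * N := by
          rw [← ENNReal.ofReal_ofNat, ← mul_assoc, ← mul_assoc, ← ENNReal.ofReal_mul hCs,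
            ← ENNReal.ofReal_mul (by positivity)]
          congr 2
          field_simp
  calc ENNReal.ofReal t *
        volume {x ∈ Ioo x0 (x0 + h) | t < |T ((Ioo x0 (x0 + 2 * h))ᶜ.indicator f) x|}
      ≤ ENNReal.ofReal (Cs * K * P / h) * N * volume (Ioo x0 (x0 + h)) :=
        mul_measure_sep_lt_le hbound t
    _ = ENNReal.ofReal (Cs * K * P) * N := by
        rw [Real.volume_Ioo, add_sub_cancel_left, mul_right_comm, ← ENNReal.ofReal_mul' hh.le,
          div_mul_cancel₀ _ hh.ne']

theorem exists_abs_apply_le_add_indicator_compl {T : (ℝ → ℝ) → ℝ → ℝ} {Cs Cw : ℝ}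
    (hCw : 0 ≤ Cw) (hsub : ∀ f g : ℝ → ℝ, ∀ᵐ x, |T (f + g) x| ≤ |T f x| + |T g x|)
    (hsize : ∀ f : ℝ → ℝ, ∀ᵐ x, ENNReal.ofReal |T f x| ≤
      ENNReal.ofReal Cs * ∫⁻ y in Ioi x, ENNReal.ofReal (|f y| / (y - x)))
    (hweak : ∀ f : ℝ → ℝ, Integrable f → ∀ γ > (0 : ℝ),
      ENNReal.ofReal γ * volume {x | γ < |T f x|} ≤ ENNReal.ofReal (Cw * ∫ x, |f x|))
    {ω f : ℝ → ℝ} {lam θ : ℝ} (hf : morreyNorm ω 1 lam θ f ≠ ∞) (x0 : ℝ) {H t : ℝ}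
    (hH : 0 < H) (ht : 0 < t) :
    ∃ g₀ : ℝ → ℝ, ENNReal.ofReal t * volume {x | t < |T g₀ x|} ≤
        ENNReal.ofReal (Cw * Phi ω lam θ x0 H) * morreyNorm ω 1 lam θ f ∧
      ∀ᵐ x, |T f x| ≤ |T g₀ x| + |T ((Ioo x0 (x0 + H))ᶜ.indicator f) x| := by
  have hnear : ∫⁻ y, ENNReal.ofReal |(Ioo x0 (x0 + H)).indicator f y| ≤
      ENNReal.ofReal (Phi ω lam θ x0 H) * morreyNorm ω 1 lam θ f := by
    calc ∫⁻ y, ENNReal.ofReal |(Ioo x0 (x0 + H)).indicator f y|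
        = ∫⁻ y in Ioo x0 (x0 + H), ENNReal.ofReal |f y| := by
          rw [← lintegral_indicator measurableSet_Ioo]
          congr 1
          funext y
          by_cases hy : y ∈ Ioo x0 (x0 + H) <;> simp [hy]
      _ ≤ _ := lintegral_Ioo_le_Phi_mul_morreyNorm hf x0 hH
  obtain ⟨g₀, hg₀, hg₀f, hsplit⟩ := exists_integrable_abs_apply_add_le hsub hsize
    (ne_top_of_le_ne_top (by finiteness) hnear) ((Ioo x0 (x0 + H))ᶜ.indicator f)
  refine ⟨g₀, (hweak g₀ hg₀ t ht).trans ?_, by rwa [indicator_self_add_compl] at hsplit⟩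
  rw [ENNReal.ofReal_mul hCw, ENNReal.ofReal_mul hCw, mul_assoc,
    ofReal_integral_eq_lintegral_ofReal hg₀.abs (ae_of_all _ fun _ => abs_nonneg _)]
  gcongr
  exact (lintegral_mono fun y => ENNReal.ofReal_le_ofReal (hg₀f y)).trans hnear

theorem sublinear_weak_type_morrey_general (lam : ℝ) (hlam1 : lam < 1)
    (ω : ℝ → ℝ) (hpos : ∀ x, 0 < ω x) (hloc : LocallyIntegrable ω volume)
    (hA : MemA1Plus ω)
    (T : (ℝ → ℝ) → ℝ → ℝ)
    (hsub : ∀ f g : ℝ → ℝ, ∀ᵐ x ∂(volume : Measure ℝ),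
      |T (f + g) x| ≤ |T f x| + |T g x|)
    (hsize : ∃ Cs > (0:ℝ), ∀ f : ℝ → ℝ, ∀ᵐ x ∂(volume : Measure ℝ),
      ENNReal.ofReal (|T f x|) ≤
        ENNReal.ofReal Cs * ∫⁻ y in Set.Ioi x, ENNReal.ofReal (|f y| / (y - x)))
    (hweak : ∃ Cw > (0:ℝ), ∀ f : ℝ → ℝ, Integrable f → ∀ γ > (0:ℝ),
      ENNReal.ofReal γ * volume {x : ℝ | γ < |T f x|}
        ≤ ENNReal.ofReal (Cw * ∫ x, |f x|)) :
    ∃ C' > (0:ℝ), ∀ f : ℝ → ℝ, morreyNorm ω 1 lam 1 f < ⊤ →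
      ∀ (x0 h γ : ℝ), 0 < h → 0 < γ →
        ENNReal.ofReal γ * volume {x ∈ Set.Ioo x0 (x0 + h) | γ < |T f x|}
          ≤ ENNReal.ofReal C' * ENNReal.ofReal (Phi ω lam 1 x0 h) *
              morreyNorm ω 1 lam 1 f := by
  obtain ⟨D, hD, hdouble⟩ := hA.exists_integral_le (fun x => (hpos x).le) hloc
  obtain ⟨Cs, hCs, hsize⟩ := hsize
  obtain ⟨Cw, hCw, hweak⟩ := hweak
  set K := D * 2 ^ lam / (1 - 2 ^ (lam - 1))
  have hK : 0 ≤ K := div_nonneg (by positivity)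
    (sub_nonneg.2 (Real.rpow_le_one_of_one_le_of_nonpos one_le_two (by linarith)))
  refine ⟨2 * (Cw + Cs * K) * (D * 2 ^ lam), by positivity, fun f hf x0 h γ hh hγ => ?_⟩
  set N := morreyNorm ω 1 lam 1 f
  set P := Phi ω lam 1 x0 (2 * h)
  have hP : 0 ≤ P := Phi_nonneg (fun x => (hpos x).le) lam x0 (by positivity)
  obtain ⟨g₀, hnear, hsplit⟩ := exists_abs_apply_le_add_indicator_compl hCw.le hsub hsize hweak
    hf.ne x0 (by positivity : 0 < 2 * h) (half_pos hγ)
  have hfar := mul_measure_abs_apply_indicator_compl_le hCs.le hsize hlam1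
    (fun R hR => Phi_mul_le hdouble lam x0 (by positivity) hR) hf.ne hh (γ / 2)
  calc ENNReal.ofReal γ * volume {x ∈ Ioo x0 (x0 + h) | γ < |T f x|}
      ≤ 2 * (ENNReal.ofReal (γ / 2) * volume {x | γ / 2 < |T g₀ x|} + ENNReal.ofReal (γ / 2) *
          volume {x ∈ Ioo x0 (x0 + h) | γ / 2 < |T ((Ioo x0 (x0 + 2 * h))ᶜ.indicator f) x|}) :=
        mul_measure_sep_lt_le_add hsplit γ
    _ ≤ 2 * (ENNReal.ofReal (Cw * P) * N + ENNReal.ofReal (Cs * K * P) * N) := by gcongr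
    _ = ENNReal.ofReal (2 * (Cw + Cs * K) * P) * N := by
        rw [← add_mul, ← ENNReal.ofReal_add (by positivity) (by positivity), ← mul_assoc,
          ← ENNReal.ofReal_ofNat, ← ENNReal.ofReal_mul zero_le_two]
        congr 2
        ring
    _ ≤ ENNReal.ofReal (2 * (Cw + Cs * K) * (D * 2 ^ lam) * Phi ω lam 1 x0 h) * N := by
        rw [mul_assoc _ (D * 2 ^ lam)]
        gcongr
        exact Phi_mul_le hdouble lam x0 hh one_le_two
    _ = _ := by rw [ENNReal.ofReal_mul (by positivity)]

/-- Weak-type boundedness of a one-sided sublinear operator on `L^{1,λ}_+(ω)`,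
`ω ∈ A_1^+`: `γ·|{x ∈ (x0,x0+h) : |T⁺f(x)| > γ}| ≤ C'·Φ⁺_{ω,λ,1}(x0,h)·‖f‖_{L^{1,λ}_+(ω)}`. -/
theorem sublinear_weak_type_morrey (lam : ℝ) (hlam0 : 0 ≤ lam) (hlam1 : lam < 1)
    (ω : ℝ → ℝ) (hpos : ∀ x, 0 < ω x) (hloc : LocallyIntegrable ω volume)
    (hA : MemA1Plus ω)
    (T : (ℝ → ℝ) → ℝ → ℝ)
    (hsub : ∀ f g : ℝ → ℝ, ∀ᵐ x ∂(volume : Measure ℝ),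
      |T (f + g) x| ≤ |T f x| + |T g x|)
    (hsize : ∃ Cs > (0:ℝ), ∀ f : ℝ → ℝ, ∀ᵐ x ∂(volume : Measure ℝ),
      ENNReal.ofReal (|T f x|) ≤
        ENNReal.ofReal Cs * ∫⁻ y in Set.Ioi x, ENNReal.ofReal (|f y| / (y - x)))
    (hweak : ∃ Cw > (0:ℝ), ∀ f : ℝ → ℝ, Integrable f → ∀ γ > (0:ℝ),
      ENNReal.ofReal γ * volume {x : ℝ | γ < |T f x|}
        ≤ ENNReal.ofReal (Cw * ∫ x, |f x|)) :
    ∃ C' > (0:ℝ), ∀ f : ℝ → ℝ, morreyNorm ω 1 lam 1 f < ⊤ →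
      ∀ (x0 h γ : ℝ), 0 < h → 0 < γ →
        ENNReal.ofReal γ * volume {x ∈ Set.Ioo x0 (x0 + h) | γ < |T f x|}
          ≤ ENNReal.ofReal C' * ENNReal.ofReal (Phi ω lam 1 x0 h) *
              morreyNorm ω 1 lam 1 f :=
  sublinear_weak_type_morrey_general lam hlam1 ω hpos hloc hA T hsub hsize hweak
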